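/- arXiv:0812.2145 — 2 statements merged into one kernel-verified Lean document; each statement's English description precedes it below -/
import Mathlib

section
/- For every d ≥ 1 and r ∈ (0,1) there exists a constant C > 0, depending only on d and r, with the following property. Let T > 0, let v : [0,T] × ℝ^d → ℝ^d be continuous, bounded, and Lipschitz in x uniformly in t, let 𝒳 be its flow, let O₀ ⊆ ℝ^d be open and O(t) := 𝒳(t,·)(O₀), and set V(t) := ∫₀ᵗ ‖v(s,·)‖_{Lip(O(s))} ds. Let f : [0,T] × ℝ^d → ℝ be of class C¹ and let g : [0,T] × ℝ^d → ℝ be continuous, with ∂_t f(t,x) + v(t,x)·∇_x f(t,x) = g(t,x) for all t ∈ [0,T] and x ∈ O(t). Then for every t ∈ [0,T]: ‖f(t,·)‖_{C^{0,r}(O(t))} ≤ C ( ‖f(0,·)‖_{C^{0,r}(O₀)} + ∫₀ᵗ ‖g(τ,·)‖_{C^{0,r}(O(τ))} e^{−C V(τ)} dτ ) e^{C V(t)}. -/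
/-!
Along a characteristic `τ ↦ 𝒳 τ x` the equation reads `d/dτ f(τ, 𝒳 τ x) = g(τ, 𝒳 τ x)`, so
`f(t, 𝒳 t x) = f(0, x) + ∫₀ᵗ g(τ, 𝒳 τ x) dτ`, which bounds the sup norm at once. For the Hölder
seminorm, the logarithmic derivative of `|𝒳 σ x - 𝒳 σ y|` is at least `-‖v(σ)‖_{Lip(O(σ))}`, so
going back from time `t` to time `τ` distances grow by at most `exp (V t - V τ)`; since `r ≤ 1`
the same factor bounds their `r`-th powers. The estimate then holds with `C = 1`.
-/

open MeasureTheory Set ENNReal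
open scoped RealInnerProductSpace NNReal

noncomputable section

abbrev Ed (d : ℕ) := EuclideanSpace ℝ (Fin d)

variable {E F : Type*} [NormedAddCommGroup E] [NormedSpace ℝ E]
  [NormedAddCommGroup F] [NormedSpace ℝ F]

/-- Extended-real sup of the norm of `u` over `U`. -/
def supN (U : Set E) (u : E → F) : ℝ≥0∞ := ⨆ x ∈ U, (‖u x‖₊ : ℝ≥0∞)

/-- Extended-real Hölder seminorm of exponent `r` of `u` over `U`. -/
def holSemi (r : ℝ) (U : Set E) (u : E → F) : ℝ≥0∞ :=
  ⨆ x ∈ U, ⨆ y ∈ U, (‖u x - u y‖₊ : ℝ≥0∞) / edist x y ^ r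

/-- The `C^{0,r}(U)` norm. -/
def c0rN (r : ℝ) (U : Set E) (u : E → F) : ℝ≥0∞ := supN U u + holSemi r U u

/-- The Lipschitz norm over `U`. -/
def lipN (U : Set E) (u : E → F) : ℝ≥0∞ := supN U u + holSemi 1 U u

/-- The flow of a time-dependent vector field on `ℝ^d`. -/
def IsFlow (d : ℕ) (v : ℝ → Ed d → Ed d) (𝒳 : ℝ → Ed d → Ed d) : Prop :=
  ∀ t x, 𝒳 t x = x + ∫ τ in (0 : ℝ)..t, v τ (𝒳 τ x)

open scoped Topology

section Curve

variable {H : Type*} [NormedAddCommGroup H] [InnerProductSpace ℝ H]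

/-- Backward Grönwall bound, via the logarithmic derivative `d/dσ log ‖u‖² = 2⟪u, u'⟫ / ‖u‖²`. -/
theorem norm_le_norm_mul_exp_integral {u u' : ℝ → H} {a b : ℝ} (hab : a ≤ b)
    (hu : ContinuousOn u (Icc a b)) (hu' : ContinuousOn u' (Icc a b))
    (hderiv : ∀ σ ∈ Ioo a b, HasDerivWithinAt u (u' σ) (Ioi σ) σ)
    (hne : ∀ σ ∈ Icc a b, u σ ≠ 0) :
    ‖u a‖ ≤ ‖u b‖ * Real.exp (∫ σ in a..b, ‖u' σ‖ / ‖u σ‖) := by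
  have hpos : ∀ σ ∈ Icc a b, 0 < ‖u σ‖ ^ 2 := fun σ hσ => by
    have := norm_pos_iff.2 (hne σ hσ); positivity
  set m' : ℝ → ℝ := fun σ => 2 * ⟪u σ, u' σ⟫ / ‖u σ‖ ^ 2
  set q : ℝ → ℝ := fun σ => ‖u' σ‖ / ‖u σ‖
  have hm'cont : ContinuousOn m' (Icc a b) :=
    (continuousOn_const.mul (hu.inner hu')).div (hu.norm.pow 2) fun σ hσ => (hpos σ hσ).ne'
  have hqcont : ContinuousOn q (Icc a b) :=
    hu'.norm.div hu.norm fun σ hσ => (norm_pos_iff.2 (hne σ hσ)).ne'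
  have hFTC : ∫ σ in a..b, m' σ = Real.log (‖u b‖ ^ 2) - Real.log (‖u a‖ ^ 2) :=
    intervalIntegral.integral_eq_sub_of_hasDeriv_right_of_le hab
      ((hu.norm.pow 2).log fun σ hσ => (hpos σ hσ).ne')
      (fun σ hσ => (hderiv σ hσ).norm_sq.log (hpos σ (Ioo_subset_Icc_self hσ)).ne')
      (hm'cont.intervalIntegrable_of_Icc hab)
  have hm'q : ∀ σ ∈ Icc a b, -m' σ ≤ 2 * q σ := fun σ hσ => by
    have hσ := norm_pos_iff.2 (hne σ hσ)
    have hinner := neg_le_of_abs_le (abs_real_inner_le_norm (u σ) (u' σ))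
    simp only [m', q, ← neg_div]
    rw [div_le_iff₀ (by positivity)]
    calc -(2 * ⟪u σ, u' σ⟫) ≤ 2 * (‖u σ‖ * ‖u' σ‖) := by linarith
      _ = 2 * (‖u' σ‖ / ‖u σ‖) * ‖u σ‖ ^ 2 := by field_simp
  have hlog : Real.log (‖u a‖ ^ 2) - Real.log (‖u b‖ ^ 2) ≤ 2 * ∫ σ in a..b, q σ := by
    rw [← intervalIntegral.integral_const_mul, ← neg_sub, ← hFTC, ← intervalIntegral.integral_neg]
    exact intervalIntegral.integral_mono_on hab (hm'cont.intervalIntegrable_of_Icc hab).neg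
      ((continuousOn_const.mul hqcont).intervalIntegrable_of_Icc hab) hm'q
  have ha := norm_pos_iff.2 (hne a (left_mem_Icc.2 hab))
  have hb := norm_pos_iff.2 (hne b (right_mem_Icc.2 hab))
  rw [Real.log_pow, Real.log_pow] at hlog
  rw [← Real.log_le_log_iff ha (by positivity), Real.log_mul hb.ne' (Real.exp_pos _).ne',
    Real.log_exp]
  push_cast at hlog
  linarith

end Curve

theorem lintegral_Ioc_eq_add {f : ℝ → ℝ≥0∞} {a b c : ℝ} (hab : a ≤ b) (hbc : b ≤ c) :
    ∫⁻ x in Ioc a c, f x = (∫⁻ x in Ioc a b, f x) + ∫⁻ x in Ioc b c, f x := by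
  rw [← Ioc_union_Ioc_eq_Ioc hab hbc,
    lintegral_union measurableSet_Ioc (Ioc_disjoint_Ioc_of_le le_rfl)]

theorem integral_le_toReal_setLIntegral {α : Type*} [MeasurableSpace α] {μ : Measure α}
    {s : Set α} {q : α → ℝ} {ℓ : α → ℝ≥0∞} (hs : MeasurableSet s) (hq : ∀ x ∈ s, 0 ≤ q x)
    (hqℓ : ∀ x ∈ s, ENNReal.ofReal (q x) ≤ ℓ x) (hℓ : ∫⁻ x in s, ℓ x ∂μ ≠ ∞) :
    ∫ x in s, q x ∂μ ≤ (∫⁻ x in s, ℓ x ∂μ).toReal := by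
  by_cases hint : IntegrableOn q s μ
  · rw [← ENNReal.ofReal_le_iff_le_toReal hℓ,
      ofReal_integral_eq_lintegral_ofReal hint ((ae_restrict_iff' hs).2 (.of_forall hq))]
    exact setLIntegral_mono' hs hqℓ
  · rw [integral_undef hint]
    exact ENNReal.toReal_nonneg

theorem enorm_intervalIntegral_le_lintegral {G : Type*} [NormedAddCommGroup G]
    [NormedSpace ℝ G] {f : ℝ → G} {a b : ℝ} (hab : a ≤ b) :
    ‖∫ x in a..b, f x‖ₑ ≤ ∫⁻ x in Ioc a b, ‖f x‖ₑ := by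
  rw [intervalIntegral.integral_of_le hab]
  exact enorm_integral_le_lintegral_enorm _

section Norms

theorem enorm_le_supN {X Y : Type*} [NormedAddCommGroup Y] {U : Set X} {u : X → Y} {x : X}
    (hx : x ∈ U) : ‖u x‖ₑ ≤ supN U u :=
  le_biSup (fun x => (‖u x‖₊ : ℝ≥0∞)) hx

variable {X Y : Type*} [NormedAddCommGroup X] [NormedAddCommGroup Y] {U : Set X} {u : X → Y}

theorem enorm_sub_div_le_holSemi {r : ℝ} {x y : X} (hx : x ∈ U) (hy : y ∈ U) :
    ‖u x - u y‖ₑ / edist x y ^ r ≤ holSemi r U u :=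
  (le_biSup (fun y => (‖u x - u y‖₊ : ℝ≥0∞) / edist x y ^ r) hy).trans
    (le_biSup (fun x => ⨆ y ∈ U, (‖u x - u y‖₊ : ℝ≥0∞) / edist x y ^ r) hx)

theorem enorm_sub_le_holSemi_mul {r : ℝ} (hr : 0 < r) {x y : X} (hx : x ∈ U) (hy : y ∈ U) :
    ‖u x - u y‖ₑ ≤ holSemi r U u * edist x y ^ r := by
  rcases eq_or_ne x y with rfl | hxy
  · simp
  · have h0 : edist x y ^ r ≠ 0 := (ENNReal.rpow_pos (edist_pos.2 hxy) (edist_ne_top x y)).ne'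
    have htop : edist x y ^ r ≠ ∞ := ENNReal.rpow_ne_top_of_nonneg hr.le (edist_ne_top x y)
    rw [← ENNReal.div_le_iff h0 htop]
    exact enorm_sub_div_le_holSemi hx hy

theorem ofReal_norm_sub_div_dist_le_lipN {x y : X} (hx : x ∈ U) (hy : y ∈ U) (hxy : x ≠ y) :
    ENNReal.ofReal (‖u x - u y‖ / dist x y) ≤ lipN U u := by
  rw [ENNReal.ofReal_div_of_pos (dist_pos.2 hxy), ofReal_norm, ← edist_dist,
    ← ENNReal.rpow_one (edist x y)]
  exact (enorm_sub_div_le_holSemi hx hy).trans le_add_self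

theorem lipN_le_of_norm_le_of_lipschitzWith {Cv : ℝ} {K : ℝ≥0} (hb : ∀ x, ‖u x‖ ≤ Cv)
    (hK : LipschitzWith K u) :
    lipN U u ≤ ENNReal.ofReal Cv + K := by
  refine add_le_add (iSup₂_le fun x _ => ?_) (iSup₂_le fun x _ => iSup₂_le fun y _ => ?_)
  · rw [← enorm_eq_nnnorm, ← ofReal_norm]
    exact ENNReal.ofReal_le_ofReal (hb x)
  · rw [ENNReal.rpow_one, ← enorm_eq_nnnorm, ← edist_eq_enorm_sub]
    exact ENNReal.div_le_of_le_mul (hK x y)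

theorem setLIntegral_lipN_ne_top {v : ℝ → X → Y} {W : ℝ → Set X} {Cv : ℝ} {K : ℝ≥0}
    (hb : ∀ t x, ‖v t x‖ ≤ Cv) (hK : ∀ t, LipschitzWith K (v t)) (a b : ℝ) :
    ∫⁻ σ in Ioc a b, lipN (W σ) (v σ) ≠ ∞ := by
  refine ne_top_of_le_ne_top ?_
    (lintegral_mono fun σ => lipN_le_of_norm_le_of_lipschitzWith (hb σ) (hK σ))
  rw [setLIntegral_const]
  exact ENNReal.mul_ne_top (by finiteness) measure_Ioc_lt_top.ne

end Norms

theorem hasDerivWithinAt_uncurry_comp {f : ℝ → E → F} {φ : ℝ → E} {φ' : E} {s : Set ℝ} {τ : ℝ}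
    (hf : DifferentiableAt ℝ (Function.uncurry f) (τ, φ τ)) (hφ : HasDerivWithinAt φ φ' s τ) :
    HasDerivWithinAt (fun σ => f σ (φ σ))
      (deriv (fun σ => f σ (φ τ)) τ + fderiv ℝ (f τ) (φ τ) φ') s τ := by
  set L := fderiv ℝ (Function.uncurry f) (τ, φ τ)
  have hL : HasFDerivAt (Function.uncurry f) L (τ, φ τ) := hf.hasFDerivAt
  have htime : HasDerivAt (fun σ => f σ (φ τ)) (L (1, 0)) τ := by
    have := hL.comp_hasDerivAt τ ((hasDerivAt_id τ).prodMk (hasDerivAt_const τ (φ τ)))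
    exact this
  have hspace : HasFDerivAt (f τ) (L.comp (.inr ℝ ℝ E)) (φ τ) :=
    hL.comp (φ τ) (hasFDerivAt_prodMk_right τ (φ τ))
  rw [htime.deriv, hspace.fderiv, ContinuousLinearMap.comp_apply, ContinuousLinearMap.inr_apply,
    ← map_add, Prod.mk_add_mk, add_zero, zero_add]
  exact hL.comp_hasDerivWithinAt τ ((hasDerivWithinAt_id τ s).prodMk hφ)

theorem one_le_ofReal_exp_neg_mul_ofReal_exp {a b : ℝ} (hab : a ≤ b) :
    1 ≤ ENNReal.ofReal (Real.exp (-a)) * ENNReal.ofReal (Real.exp b) := by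
  rw [← ENNReal.ofReal_mul (Real.exp_pos _).le, ← Real.exp_add]
  exact ENNReal.one_le_ofReal.2 (Real.one_le_exp (by linarith))

/-- The paper's `V(t) = ∫₀ᵗ ‖v(σ)‖_{Lip(O(σ))} dσ`. -/
def lipIntegral {X Y : Type*} [NormedAddCommGroup X] [NormedAddCommGroup Y] (v : ℝ → X → Y)
    (O : ℝ → Set X) (t : ℝ) : ℝ :=
  (∫⁻ σ in Ioc 0 t, lipN (O σ) (v σ)).toReal

section LipIntegral

variable {X Y : Type*} [NormedAddCommGroup X] [NormedAddCommGroup Y] {v : ℝ → X → Y}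
  {O : ℝ → Set X}

@[simp]
theorem lipIntegral_zero : lipIntegral v O 0 = 0 := by
  simp [lipIntegral]

theorem lipIntegral_nonneg (t : ℝ) : 0 ≤ lipIntegral v O t :=
  ENNReal.toReal_nonneg

theorem lipIntegral_sub {Cv : ℝ} {K : ℝ≥0} (hb : ∀ t x, ‖v t x‖ ≤ Cv)
    (hK : ∀ t, LipschitzWith K (v t)) {τ t : ℝ} (hτ : 0 ≤ τ) (hτt : τ ≤ t) :
    lipIntegral v O t - lipIntegral v O τ = (∫⁻ σ in Ioc τ t, lipN (O σ) (v σ)).toReal := by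
  rw [lipIntegral, lipIntegral, lintegral_Ioc_eq_add hτ hτt, ENNReal.toReal_add
    (setLIntegral_lipN_ne_top hb hK _ _) (setLIntegral_lipN_ne_top hb hK _ _)]
  ring

theorem lipIntegral_mono {Cv : ℝ} {K : ℝ≥0} (hb : ∀ t x, ‖v t x‖ ≤ Cv)
    (hK : ∀ t, LipschitzWith K (v t)) {τ t : ℝ} (hτ : 0 ≤ τ) (hτt : τ ≤ t) :
    lipIntegral v O τ ≤ lipIntegral v O t :=
  sub_nonneg.1 ((lipIntegral_sub hb hK hτ hτt).symm ▸ ENNReal.toReal_nonneg)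

end LipIntegral

namespace IsFlow

variable {d : ℕ} {v 𝒳 : ℝ → Ed d → Ed d} {Cv : ℝ} {K : ℝ≥0}

theorem zero_apply (hX : IsFlow d v 𝒳) (x : Ed d) : 𝒳 0 x = x := by
  simpa using hX 0 x

theorem continuousOn_Icc_of_integrableOn (hX : IsFlow d v 𝒳) {x : Ed d} {s : ℝ} (hs : 0 ≤ s)
    (hint : IntegrableOn (fun τ => v τ (𝒳 τ x)) (Ioc 0 s)) :
    ContinuousOn (fun τ => 𝒳 τ x) (Icc 0 s) := by
  have hprim := intervalIntegral.continuousOn_primitive_interval (a := 0) (b := s)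
    (μ := volume) (f := fun τ => v τ (𝒳 τ x))
    (by rwa [uIcc_of_le hs, integrableOn_Icc_iff_integrableOn_Ioc])
  rw [uIcc_of_le hs] at hprim
  exact (continuousOn_const.add hprim).congr fun τ _ => hX τ x

/-- `IsFlow` does not assume the integrand integrable (a non-integrable one has integral `0`).
If integrability first failed at time `b`, the flow would sit still (`𝒳 s x = x`) after `b` and
be continuous before it, so the bounded integrand would be integrable past `b` after all. -/
theorem integrableOn_Ioc (hv : Continuous (Function.uncurry v)) (hb : ∀ t x, ‖v t x‖ ≤ Cv)
    (hX : IsFlow d v 𝒳) (x : Ed d) {s : ℝ} (hs : 0 ≤ s) :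
    IntegrableOn (fun τ => v τ (𝒳 τ x)) (Ioc 0 s) := by
  set W : ℝ → Ed d := fun τ => v τ (𝒳 τ x)
  by_contra hns
  set S := {s : ℝ | 0 ≤ s ∧ ¬ IntegrableOn W (Ioc 0 s)}
  have hS : S.Nonempty := ⟨s, hs, hns⟩
  have hSbdd : BddBelow S := ⟨0, fun _ h => h.1⟩
  set b := sInf S
  have hb0 : 0 ≤ b := le_csInf hS fun _ h => h.1
  have hnot : ∀ s, b < s → ¬ IntegrableOn W (Ioc 0 s) := fun s hbs hint => by
    obtain ⟨s', ⟨_, hs'⟩, hs's⟩ := exists_lt_of_csInf_lt hS hbs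
    exact hs' (hint.mono_set (Ioc_subset_Ioc_right hs's.le))
  have hcont : ContinuousOn W (Ioo 0 b) := fun τ hτ => by
    obtain ⟨s', hτs', hs'b⟩ := exists_between hτ.2
    have hint : IntegrableOn W (Ioc 0 s') :=
      by_contra fun h => (csInf_le hSbdd ⟨hτ.1.le.trans hτs'.le, h⟩).not_gt hs'b
    have hW : ContinuousOn W (Icc 0 s') := hv.comp_continuousOn
      (continuousOn_id.prodMk (hX.continuousOn_Icc_of_integrableOn (hτ.1.le.trans hτs'.le) hint))
    exact ((hW.mono Ioo_subset_Icc_self).continuousAt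
      (Ioo_mem_nhds hτ.1 hτs')).continuousWithinAt
  have hbelow : IntegrableOn W (Ioc 0 b) := by
    rw [integrableOn_Ioc_iff_integrableOn_Ioo]
    exact (integrableOn_const measure_Ioo_lt_top.ne).mono'
      (hcont.aestronglyMeasurable measurableSet_Ioo) (.of_forall fun τ => hb τ _)
  have habove : IntegrableOn W (Ioc b (b + 1)) := by
    refine (hv.comp (continuous_id.prodMk (continuous_const (y := x)))).integrableOn_Ioc.congr_fun
      (fun τ hτ => ?_) measurableSet_Ioc
    have hτ : ¬ IntervalIntegrable W volume 0 τ := by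
      rw [intervalIntegrable_iff_integrableOn_Ioc_of_le (hb0.trans hτ.1.le)]
      exact hnot τ hτ.1
    simp [W, hX τ x, intervalIntegral.integral_undef hτ]
  refine hnot (b + 1) (lt_add_one b) ?_
  rw [← Ioc_union_Ioc_eq_Ioc hb0 (le_add_of_nonneg_right zero_le_one)]
  exact hbelow.union habove

variable (hv : Continuous (Function.uncurry v)) (hb : ∀ t x, ‖v t x‖ ≤ Cv)
  (hX : IsFlow d v 𝒳)
include hv hb hX

theorem continuousOn_Icc (x : Ed d) {s : ℝ} (hs : 0 ≤ s) :
    ContinuousOn (fun τ => 𝒳 τ x) (Icc 0 s) :=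
  hX.continuousOn_Icc_of_integrableOn hs (hX.integrableOn_Ioc hv hb x hs)

theorem continuousOn_Icc_velocity (x : Ed d) {s : ℝ} (hs : 0 ≤ s) :
    ContinuousOn (fun τ => v τ (𝒳 τ x)) (Icc 0 s) :=
  hv.comp_continuousOn (continuousOn_id.prodMk (continuousOn_Icc hv hb hX x hs))

theorem hasDerivWithinAt_Ici (x : Ed d) {τ : ℝ} (hτ : 0 ≤ τ) :
    HasDerivWithinAt (fun s => 𝒳 s x) (v τ (𝒳 τ x)) (Ici τ) τ := by
  have hτ1 : τ ≤ τ + 1 := le_add_of_nonneg_right zero_le_one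
  have hW := continuousOn_Icc_velocity hv hb hX x (hτ.trans hτ1)
  have hnhds : Icc 0 (τ + 1) ∈ 𝓝[Ioi τ] τ :=
    mem_nhdsWithin.2 ⟨Iio (τ + 1), isOpen_Iio, lt_add_one τ,
      fun s hs => ⟨hτ.trans (le_of_lt hs.2), hs.1.le⟩⟩
  have hprim := intervalIntegral.integral_hasDerivWithinAt_right (s := Ici τ) (t := Ioi τ)
    ((hW.mono (Icc_subset_Icc_right hτ1)).intervalIntegrable_of_Icc hτ)
    ⟨_, hnhds, hW.aestronglyMeasurable measurableSet_Icc⟩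
    ((hW.continuousWithinAt ⟨hτ, hτ1⟩).mono_of_mem_nhdsWithin hnhds)
  exact (hprim.const_add x).congr (fun s _ => hX s x) (hX τ x)

theorem intervalIntegrable_comp {g : ℝ → Ed d → ℝ} (hg : Continuous (Function.uncurry g))
    (x : Ed d) {t : ℝ} (ht : 0 ≤ t) : IntervalIntegrable (fun τ => g τ (𝒳 τ x)) volume 0 t :=
  ContinuousOn.intervalIntegrable_of_Icc ht
    (hg.comp_continuousOn (continuousOn_id.prodMk (continuousOn_Icc hv hb hX x ht)))

theorem apply_eq_add_integral {f g : ℝ → Ed d → ℝ} (hf : ContDiff ℝ 1 (Function.uncurry f))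
    (hg : Continuous (Function.uncurry g)) (x : Ed d) {t : ℝ} (ht : 0 ≤ t)
    (hpde : ∀ τ ∈ Ioo 0 t, deriv (fun s => f s (𝒳 τ x)) τ
      + fderiv ℝ (f τ) (𝒳 τ x) (v τ (𝒳 τ x)) = g τ (𝒳 τ x)) :
    f t (𝒳 t x) = f 0 x + ∫ τ in 0..t, g τ (𝒳 τ x) := by
  have hφ := continuousOn_Icc hv hb hX x ht
  have hFTC := intervalIntegral.integral_eq_sub_of_hasDeriv_right_of_le
    (f := fun τ => f τ (𝒳 τ x)) (f' := fun τ => g τ (𝒳 τ x)) ht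
    (hf.continuous.comp_continuousOn (continuousOn_id.prodMk hφ))
    (fun τ hτ => hpde τ hτ ▸ (hasDerivWithinAt_uncurry_comp
      ((hf.differentiable one_ne_zero) _) (hasDerivWithinAt_Ici hv hb hX x hτ.1.le)).mono
        Ioi_subset_Ici_self)
    (intervalIntegrable_comp hv hb hX hg x ht)
  rw [hFTC, hX.zero_apply]
  ring

variable (hK : ∀ t, LipschitzWith K (v t))
include hK

theorem apply_eq_apply_of_le {x y : Ed d} {σ t : ℝ} (hσ : 0 ≤ σ) (hσt : σ ≤ t)
    (h : 𝒳 σ x = 𝒳 σ y) : 𝒳 t x = 𝒳 t y :=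
  ODE_solution_unique hK
    ((continuousOn_Icc hv hb hX x (hσ.trans hσt)).mono (Icc_subset_Icc_left hσ))
    (fun _ hτ => hasDerivWithinAt_Ici hv hb hX x (hσ.trans hτ.1))
    ((continuousOn_Icc hv hb hX y (hσ.trans hσt)).mono (Icc_subset_Icc_left hσ))
    (fun _ hτ => hasDerivWithinAt_Ici hv hb hX y (hσ.trans hτ.1)) h ⟨hσt, le_rfl⟩

theorem dist_le_dist_mul_exp_integral {x y : Ed d} {τ t : ℝ} (hτ : 0 ≤ τ) (hτt : τ ≤ t)
    (hne : 𝒳 t x ≠ 𝒳 t y) :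
    dist (𝒳 τ x) (𝒳 τ y) ≤ dist (𝒳 t x) (𝒳 t y) *
      Real.exp (∫ σ in τ..t, ‖v σ (𝒳 σ x) - v σ (𝒳 σ y)‖ / dist (𝒳 σ x) (𝒳 σ y)) := by
  have hsub : Icc τ t ⊆ Icc 0 t := Icc_subset_Icc_left hτ
  have ht : 0 ≤ t := hτ.trans hτt
  simp only [dist_eq_norm]
  refine norm_le_norm_mul_exp_integral hτt
    (((continuousOn_Icc hv hb hX x ht).sub (continuousOn_Icc hv hb hX y ht)).mono hsub)
    (((continuousOn_Icc_velocity hv hb hX x ht).sub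
      (continuousOn_Icc_velocity hv hb hX y ht)).mono hsub)
    (fun σ hσ => ((hasDerivWithinAt_Ici hv hb hX x (hτ.trans hσ.1.le)).sub
      (hasDerivWithinAt_Ici hv hb hX y (hτ.trans hσ.1.le))).mono Ioi_subset_Ici_self)
    (fun σ hσ => sub_ne_zero.2 fun h => hne (apply_eq_apply_of_le hv hb hX hK
      (hτ.trans hσ.1) hσ.2 h))

variable {O₀ : Set (Ed d)}

local notation "V" => lipIntegral v (fun σ => 𝒳 σ '' O₀)

theorem dist_le_dist_mul_exp_lipIntegral {x y : Ed d} (hx : x ∈ O₀) (hy : y ∈ O₀) {τ t : ℝ}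
    (hτ : 0 ≤ τ) (hτt : τ ≤ t) (hne : 𝒳 t x ≠ 𝒳 t y) :
    dist (𝒳 τ x) (𝒳 τ y) ≤ dist (𝒳 t x) (𝒳 t y) * Real.exp (V t - V τ) := by
  refine (dist_le_dist_mul_exp_integral hv hb hX hK hτ hτt hne).trans ?_
  gcongr
  rw [lipIntegral_sub hb hK hτ hτt, intervalIntegral.integral_of_le hτt]
  refine integral_le_toReal_setLIntegral measurableSet_Ioc (fun σ _ => by positivity)
    (fun σ hσ => ofReal_norm_sub_div_dist_le_lipN (mem_image_of_mem _ hx) (mem_image_of_mem _ hy)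
      fun h => hne (apply_eq_apply_of_le hv hb hX hK (hτ.trans hσ.1.le) hσ.2 h))
    (setLIntegral_lipN_ne_top hb hK _ _)

theorem edist_rpow_le_mul_exp {r : ℝ} (hr0 : 0 ≤ r) (hr1 : r ≤ 1) {x y : Ed d} (hx : x ∈ O₀)
    (hy : y ∈ O₀) {τ t : ℝ} (hτ : 0 ≤ τ) (hτt : τ ≤ t) (hne : 𝒳 t x ≠ 𝒳 t y) :
    edist (𝒳 τ x) (𝒳 τ y) ^ r ≤ edist (𝒳 t x) (𝒳 t y) ^ r *
      (ENNReal.ofReal (Real.exp (-V τ)) * ENNReal.ofReal (Real.exp (V t))) := by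
  have hV := lipIntegral_mono (O := fun σ => 𝒳 σ '' O₀) hb hK hτ hτt
  have hdist := dist_le_dist_mul_exp_lipIntegral hv hb hX hK hx hy hτ hτt hne
  rw [edist_dist, edist_dist, ENNReal.ofReal_rpow_of_nonneg dist_nonneg hr0,
    ENNReal.ofReal_rpow_of_nonneg dist_nonneg hr0, ← ENNReal.ofReal_mul (Real.exp_pos _).le,
    ← Real.exp_add, ← ENNReal.ofReal_mul (by positivity)]
  refine ENNReal.ofReal_le_ofReal ?_
  calc dist (𝒳 τ x) (𝒳 τ y) ^ r
      ≤ (dist (𝒳 t x) (𝒳 t y) * Real.exp (V t - V τ)) ^ r :=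
        Real.rpow_le_rpow dist_nonneg hdist hr0
    _ = dist (𝒳 t x) (𝒳 t y) ^ r * Real.exp ((V t - V τ) * r) := by
        rw [Real.mul_rpow dist_nonneg (Real.exp_pos _).le, Real.exp_mul]
    _ ≤ dist (𝒳 t x) (𝒳 t y) ^ r * Real.exp (-V τ + V t) := by
        gcongr
        nlinarith

variable {f g : ℝ → Ed d → ℝ} (hf : ContDiff ℝ 1 (Function.uncurry f))
  (hg : Continuous (Function.uncurry g)) {t : ℝ} (ht : 0 ≤ t)
  (hpde : ∀ τ ∈ Ioo 0 t, ∀ z ∈ 𝒳 τ '' O₀,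
    deriv (fun s => f s z) τ + fderiv ℝ (f τ) z (v τ z) = g τ z)
include hf hg ht hpde

theorem supN_image_le :
    supN (𝒳 t '' O₀) (f t) ≤ supN O₀ (f 0) +
      (∫⁻ τ in Ioc 0 t, supN (𝒳 τ '' O₀) (g τ) * ENNReal.ofReal (Real.exp (-V τ))) *
        ENNReal.ofReal (Real.exp (V t)) := by
  refine iSup₂_le ?_
  rintro _ ⟨x, hx, rfl⟩
  rw [← enorm_eq_nnnorm, apply_eq_add_integral hv hb hX hf hg x ht
    fun τ hτ => hpde τ hτ _ (mem_image_of_mem _ hx)]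
  refine (enorm_add_le _ _).trans (add_le_add (enorm_le_supN hx) ?_)
  refine (enorm_intervalIntegral_le_lintegral ht).trans ?_
  rw [← lintegral_mul_const' _ _ ENNReal.ofReal_ne_top]
  refine setLIntegral_mono' measurableSet_Ioc fun τ hτ => ?_
  calc ‖g τ (𝒳 τ x)‖ₑ ≤ supN (𝒳 τ '' O₀) (g τ) * 1 := by
        rw [mul_one]; exact enorm_le_supN (mem_image_of_mem _ hx)
    _ ≤ supN (𝒳 τ '' O₀) (g τ) *
        (ENNReal.ofReal (Real.exp (-V τ)) * ENNReal.ofReal (Real.exp (V t))) := by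
        gcongr
        exact one_le_ofReal_exp_neg_mul_ofReal_exp (lipIntegral_mono hb hK hτ.1.le hτ.2)
    _ = _ := (mul_assoc _ _ _).symm

theorem holSemi_image_le {r : ℝ} (hr0 : 0 < r) (hr1 : r ≤ 1) :
    holSemi r (𝒳 t '' O₀) (f t) ≤ holSemi r O₀ (f 0) * ENNReal.ofReal (Real.exp (V t)) +
      (∫⁻ τ in Ioc 0 t, holSemi r (𝒳 τ '' O₀) (g τ) * ENNReal.ofReal (Real.exp (-V τ))) *
        ENNReal.ofReal (Real.exp (V t)) := by
  refine iSup₂_le ?_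
  rintro _ ⟨x, hx, rfl⟩
  refine iSup₂_le ?_
  rintro _ ⟨y, hy, rfl⟩
  rcases eq_or_ne (𝒳 t x) (𝒳 t y) with heq | hne
  · simp [heq]
  refine ENNReal.div_le_of_le_mul ?_
  have hdiff : f t (𝒳 t x) - f t (𝒳 t y) =
      (f 0 x - f 0 y) + ∫ τ in 0..t, (g τ (𝒳 τ x) - g τ (𝒳 τ y)) := by
    rw [apply_eq_add_integral hv hb hX hf hg x ht fun τ hτ => hpde τ hτ _ (mem_image_of_mem _ hx),
      apply_eq_add_integral hv hb hX hf hg y ht fun τ hτ => hpde τ hτ _ (mem_image_of_mem _ hy),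
      intervalIntegral.integral_sub (intervalIntegrable_comp hv hb hX hg x ht)
        (intervalIntegrable_comp hv hb hX hg y ht)]
    ring
  have hinitial : ‖f 0 x - f 0 y‖ₑ ≤ holSemi r O₀ (f 0) * ENNReal.ofReal (Real.exp (V t)) *
      edist (𝒳 t x) (𝒳 t y) ^ r := by
    have h := edist_rpow_le_mul_exp hv hb hX hK hr0.le hr1 hx hy le_rfl ht hne
    rw [hX.zero_apply, hX.zero_apply, lipIntegral_zero, neg_zero, Real.exp_zero,
      ENNReal.ofReal_one, one_mul] at h
    calc ‖f 0 x - f 0 y‖ₑ ≤ holSemi r O₀ (f 0) * edist x y ^ r := enorm_sub_le_holSemi_mul hr0 hx hy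
      _ ≤ _ := by rw [mul_assoc, mul_comm (ENNReal.ofReal _)]; gcongr
  have hsource : ‖∫ τ in 0..t, (g τ (𝒳 τ x) - g τ (𝒳 τ y))‖ₑ ≤
      (∫⁻ τ in Ioc 0 t, holSemi r (𝒳 τ '' O₀) (g τ) * ENNReal.ofReal (Real.exp (-V τ))) *
        ENNReal.ofReal (Real.exp (V t)) * edist (𝒳 t x) (𝒳 t y) ^ r := by
    refine (enorm_intervalIntegral_le_lintegral ht).trans ?_
    rw [mul_assoc, ← lintegral_mul_const' _ _ (by finiteness)]
    refine setLIntegral_mono' measurableSet_Ioc fun τ hτ => ?_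
    calc ‖g τ (𝒳 τ x) - g τ (𝒳 τ y)‖ₑ
        ≤ holSemi r (𝒳 τ '' O₀) (g τ) * edist (𝒳 τ x) (𝒳 τ y) ^ r :=
          enorm_sub_le_holSemi_mul hr0 (mem_image_of_mem _ hx) (mem_image_of_mem _ hy)
      _ ≤ holSemi r (𝒳 τ '' O₀) (g τ) * (edist (𝒳 t x) (𝒳 t y) ^ r *
          (ENNReal.ofReal (Real.exp (-V τ)) * ENNReal.ofReal (Real.exp (V t)))) := by
          gcongr
          exact edist_rpow_le_mul_exp hv hb hX hK hr0.le hr1 hx hy hτ.1.le hτ.2 hne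
      _ = _ := by ring
  calc ‖f t (𝒳 t x) - f t (𝒳 t y)‖ₑ
      ≤ ‖f 0 x - f 0 y‖ₑ + ‖∫ τ in 0..t, (g τ (𝒳 τ x) - g τ (𝒳 τ y))‖ₑ :=
        hdiff ▸ enorm_add_le _ _
    _ ≤ _ := by rw [add_mul]; exact add_le_add hinitial hsource

theorem c0rN_image_le {r : ℝ} (hr0 : 0 < r) (hr1 : r ≤ 1) :
    c0rN r (𝒳 t '' O₀) (f t) ≤ (c0rN r O₀ (f 0) +
      ∫⁻ τ in Ioc 0 t, c0rN r (𝒳 τ '' O₀) (g τ) * ENNReal.ofReal (Real.exp (-V τ))) *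
        ENNReal.ofReal (Real.exp (V t)) := by
  have hsup := supN_image_le hv hb hX hK hf hg ht hpde
  have hhol := holSemi_image_le hv hb hX hK hf hg ht hpde hr0 hr1
  have hE : 1 ≤ ENNReal.ofReal (Real.exp (V t)) :=
    ENNReal.one_le_ofReal.2 (Real.one_le_exp (lipIntegral_nonneg t))
  have hsource := le_lintegral_add (μ := volume.restrict (Ioc 0 t))
    (fun τ => supN (𝒳 τ '' O₀) (g τ) * ENNReal.ofReal (Real.exp (-V τ)))
    (fun τ => holSemi r (𝒳 τ '' O₀) (g τ) * ENNReal.ofReal (Real.exp (-V τ)))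
  simp only [← add_mul] at hsource
  calc c0rN r (𝒳 t '' O₀) (f t) = supN (𝒳 t '' O₀) (f t) + holSemi r (𝒳 t '' O₀) (f t) := rfl
    _ ≤ _ := add_le_add hsup hhol
    _ ≤ (supN O₀ (f 0) * ENNReal.ofReal (Real.exp (V t)) + _) + _ := by
        gcongr
        exact le_mul_of_one_le_right' hE
    _ = (c0rN r O₀ (f 0) +
          ((∫⁻ τ in Ioc 0 t, supN (𝒳 τ '' O₀) (g τ) * ENNReal.ofReal (Real.exp (-V τ))) +
            ∫⁻ τ in Ioc 0 t, holSemi r (𝒳 τ '' O₀) (g τ) * ENNReal.ofReal (Real.exp (-V τ)))) *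
          ENNReal.ofReal (Real.exp (V t)) := by
        rw [c0rN]; ring
    _ ≤ _ := by gcongr; exact hsource

end IsFlow

theorem holder_transport_estimate_general (d : ℕ) (r : ℝ) (hr : r ∈ Ioo (0 : ℝ) 1) :
    ∃ C > (0 : ℝ), ∀ (T : ℝ), 0 < T →
      ∀ v : ℝ → Ed d → Ed d, Continuous (Function.uncurry v) →
        (∃ Cv, ∀ t x, ‖v t x‖ ≤ Cv) → (∃ K : ℝ≥0, ∀ t, LipschitzWith K (v t)) →
      ∀ 𝒳 : ℝ → Ed d → Ed d, IsFlow d v 𝒳 →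
      ∀ O₀ : Set (Ed d), IsOpen O₀ →
      ∀ f : ℝ → Ed d → ℝ, ContDiff ℝ 1 (Function.uncurry f) →
      ∀ g : ℝ → Ed d → ℝ, Continuous (Function.uncurry g) →
        (∀ t ∈ Icc (0 : ℝ) T, ∀ x ∈ 𝒳 t '' O₀,
          deriv (fun τ => f τ x) t + fderiv ℝ (f t) x (v t x) = g t x) →
      ∀ t ∈ Icc (0 : ℝ) T,
        c0rN r (𝒳 t '' O₀) (f t)
          ≤ ENNReal.ofReal C
            * (c0rN r O₀ (f 0)
                + ∫⁻ τ in Ioc (0 : ℝ) t,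
                    c0rN r (𝒳 τ '' O₀) (g τ)
                      * ENNReal.ofReal (Real.exp (- C *
                          (∫⁻ σ in Ioc (0 : ℝ) τ, lipN (𝒳 σ '' O₀) (v σ)).toReal)))
            * ENNReal.ofReal (Real.exp (C *
                (∫⁻ σ in Ioc (0 : ℝ) t, lipN (𝒳 σ '' O₀) (v σ)).toReal)) := by
  refine ⟨1, one_pos, ?_⟩
  rintro T - v hv ⟨Cv, hb⟩ ⟨K, hK⟩ 𝒳 hX O₀ - f hf g hg hpde t ht
  simp only [ENNReal.ofReal_one, one_mul, neg_mul]
  exact hX.c0rN_image_le hv hb hK hf hg ht.1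
    (fun τ hτ => hpde τ ⟨hτ.1.le, hτ.2.le.trans ht.2⟩) hr.1 hr.2.le

/-- `C^{0,r}` transport estimate along the flow of a Lipschitz vector
field, with a constant depending only on `d` and `r`: the exponential amplification factor
involves `V(t) = ∫₀ᵗ ‖v(s)‖_{Lip(O(s))} ds`. -/
theorem holder_transport_estimate (d : ℕ) (hd : 1 ≤ d) (r : ℝ) (hr : r ∈ Ioo (0 : ℝ) 1) :
    ∃ C > (0 : ℝ), ∀ (T : ℝ), 0 < T →
      ∀ v : ℝ → Ed d → Ed d, Continuous (Function.uncurry v) →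
        (∃ Cv, ∀ t x, ‖v t x‖ ≤ Cv) → (∃ K : ℝ≥0, ∀ t, LipschitzWith K (v t)) →
      ∀ 𝒳 : ℝ → Ed d → Ed d, IsFlow d v 𝒳 →
      ∀ O₀ : Set (Ed d), IsOpen O₀ →
      ∀ f : ℝ → Ed d → ℝ, ContDiff ℝ 1 (Function.uncurry f) →
      ∀ g : ℝ → Ed d → ℝ, Continuous (Function.uncurry g) →
        (∀ t ∈ Icc (0 : ℝ) T, ∀ x ∈ 𝒳 t '' O₀,
          deriv (fun τ => f τ x) t + fderiv ℝ (f t) x (v t x) = g t x) →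
      ∀ t ∈ Icc (0 : ℝ) T,
        c0rN r (𝒳 t '' O₀) (f t)
          ≤ ENNReal.ofReal C
            * (c0rN r O₀ (f 0)
                + ∫⁻ τ in Ioc (0 : ℝ) t,
                    c0rN r (𝒳 τ '' O₀) (g τ)
                      * ENNReal.ofReal (Real.exp (- C *
                          (∫⁻ σ in Ioc (0 : ℝ) τ, lipN (𝒳 σ '' O₀) (v σ)).toReal)))
            * ENNReal.ofReal (Real.exp (C *
                (∫⁻ σ in Ioc (0 : ℝ) t, lipN (𝒳 σ '' O₀) (v σ)).toReal)) :=
  holder_transport_estimate_general d r hr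

end
end

section
/- Let d ≥ 1, T > 0, and let v : [0,T] × ℝ^d → ℝ^d be of class C², bounded with bounded first and second derivatives, and divergence-free (Σ_i ∂_{x_i} v_i = 0 everywhere). Let w : [0,T] × ℝ^d → ℝ^d be of class C², bounded with bounded first derivatives, and solve the stretching equation ∂_t w + (v·∇)w = (w·∇)v at every point. If div_x w(0,·) = 0 on ℝ^d, then div_x w(t,·) = 0 on ℝ^d for every t ∈ [0,T]. -/
open MeasureTheory Set

noncomputable section

/-- The pointwise divergence of a vector field on `ℝ^d`. -/
def divg (d : ℕ) (u : Ed d → Ed d) (x : Ed d) : ℝ :=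
  ∑ i : Fin d, fderiv ℝ u x (EuclideanSpace.single i 1) i

/-!
Differentiating the stretching equation `∂ₜw + Dw v = Dv w` in `x` and taking traces, the terms
`tr (Dw Dv)` and `tr (Dv Dw)` cancel, and by symmetry of second derivatives the remaining term
`tr (D²v (w, ·))` is the derivative of `div v = 0` in the direction `w`. What is left is the
transport equation `(∂ₜ + v · ∇) div w = 0`. As `v` is bounded and Lipschitz in `x`, the
Picard–Lindelöf theorem gives through every `(t, x)` a characteristic curve on `[0, T]`, along
which `div w` is constant, hence equal to its initial value `0`.
-/

open ContinuousLinearMap Function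
open scoped NNReal

variable {E F : Type*} [NormedAddCommGroup E] [NormedSpace ℝ E]
  [NormedAddCommGroup F] [NormedSpace ℝ F]

namespace ContinuousLinearMap

variable (E) [FiniteDimensional ℝ E]

def traceL : (E →L[ℝ] E) →L[ℝ] ℝ :=
  LinearMap.toContinuousLinearMap (LinearMap.trace ℝ E ∘ₗ coeLM ℝ)

variable {E}

@[simp]
lemma traceL_apply (f : E →L[ℝ] E) : traceL E f = LinearMap.trace ℝ E f := rfl

lemma traceL_comp_comm (f g : E →L[ℝ] E) : traceL E (f ∘L g) = traceL E (g ∘L f) :=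
  LinearMap.trace_comp_comm' (g : E →ₗ[ℝ] E) f

end ContinuousLinearMap

lemma divg_eq_traceL {d : ℕ} (u : Ed d → Ed d) (x : Ed d) :
    divg d u x = traceL (Ed d) (fderiv ℝ u x) := by
  rw [traceL_apply, LinearMap.trace_eq_matrix_trace ℝ (EuclideanSpace.basisFun (Fin d) ℝ).toBasis,
    Matrix.trace, divg]
  simp [LinearMap.toMatrix_apply]

section SpaceTime

lemma fderiv_eq_fderiv_uncurry_comp_inr {u : ℝ → E → F} {t : ℝ} {x : E}
    (hu : DifferentiableAt ℝ (uncurry u) (t, x)) :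
    fderiv ℝ (u t) x = fderiv ℝ (uncurry u) (t, x) ∘L inr ℝ ℝ E :=
  (hu.hasFDerivAt.comp x (hasFDerivAt_prodMk_right t x)).fderiv

lemma deriv_eq_fderiv_uncurry_apply {u : ℝ → E → F} {t : ℝ} {x : E}
    (hu : DifferentiableAt ℝ (uncurry u) (t, x)) :
    deriv (u · x) t = fderiv ℝ (uncurry u) (t, x) (1, 0) := by
  have := (hu.hasFDerivAt.comp t (hasFDerivAt_prodMk_left t x)).hasDerivAt.deriv
  simpa [Function.comp_def] using this

lemma lipschitzWith_of_norm_fderiv_uncurry_le {u : ℝ → E → F}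
    (hu : Differentiable ℝ (uncurry u)) {C : ℝ≥0}
    (hC : ∀ p, ‖fderiv ℝ (uncurry u) p‖ ≤ C) (t : ℝ) : LipschitzWith C (u t) := by
  refine lipschitzWith_of_nnnorm_fderiv_le (fun x ↦ (hu (t, x)).comp x ?_) fun x ↦ ?_
  · exact (hasFDerivAt_prodMk_right t x).differentiableAt
  rw [← NNReal.coe_le_coe, coe_nnnorm, fderiv_eq_fderiv_uncurry_comp_inr (hu (t, x))]
  calc ‖fderiv ℝ (uncurry u) (t, x) ∘L inr ℝ ℝ E‖
      ≤ ‖fderiv ℝ (uncurry u) (t, x)‖ * ‖inr ℝ ℝ E‖ := opNorm_comp_le _ _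
    _ ≤ C * 1 := by gcongr; exacts [hC _, norm_inr_le_one ℝ ℝ E]
    _ = C := mul_one _

lemma hasFDerivAt_fderiv_apply_prodMk {G : ℝ × E → F} (hG : ContDiff ℝ 2 G) (t c : ℝ)
    {u : E → E} {u' : E →L[ℝ] E} {x : E} (hu : HasFDerivAt u u' x) :
    HasFDerivAt (fun y ↦ fderiv ℝ G (t, y) (c, u y))
      (fderiv ℝ (fderiv ℝ G) (t, x) (c, u x) ∘L inr ℝ ℝ E
        + (fderiv ℝ G (t, x) ∘L inr ℝ ℝ E) ∘L u') x := by
  have hG' : HasFDerivAt (fun y ↦ fderiv ℝ G (t, y)) (fderiv ℝ (fderiv ℝ G) (t, x) ∘L inr ℝ ℝ E) x :=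
    ((hG.fderiv_right le_rfl).differentiable one_ne_zero (t, x)).hasFDerivAt.comp x
      (hasFDerivAt_prodMk_right t x)
  have hsymm := hG.contDiffAt.isSymmSndFDerivAt (x := (t, x)) (by simp)
  refine (hG'.clm_apply ((hasFDerivAt_const c x).prodMk hu)).congr_fderiv (ext fun h ↦ ?_)
  simp [hsymm (0, h), add_comm]

end SpaceTime

section Divergence

variable [FiniteDimensional ℝ E]

def spaceDiv (G : ℝ × E → E) (p : ℝ × E) : ℝ :=
  traceL E (fderiv ℝ G p ∘L inr ℝ ℝ E)

lemma spaceDiv_uncurry {u : ℝ → E → E} {t : ℝ} {x : E}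
    (hu : DifferentiableAt ℝ (uncurry u) (t, x)) :
    spaceDiv (uncurry u) (t, x) = traceL E (fderiv ℝ (u t) x) := by
  rw [spaceDiv, fderiv_eq_fderiv_uncurry_comp_inr hu]

lemma hasFDerivAt_spaceDiv {G : ℝ × E → E} (hG : ContDiff ℝ 2 G) (p : ℝ × E) :
    HasFDerivAt (spaceDiv G)
      (traceL E ∘L (compL ℝ E (ℝ × E) E).flip (inr ℝ ℝ E) ∘L fderiv ℝ (fderiv ℝ G) p) p :=
  (traceL E ∘L (compL ℝ E (ℝ × E) E).flip (inr ℝ ℝ E)).hasFDerivAt.comp p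
    ((hG.fderiv_right le_rfl).differentiable one_ne_zero p).hasFDerivAt

lemma fderiv_spaceDiv_apply {G : ℝ × E → E} (hG : ContDiff ℝ 2 G) (p q : ℝ × E) :
    fderiv ℝ (spaceDiv G) p q = traceL E (fderiv ℝ (fderiv ℝ G) p q ∘L inr ℝ ℝ E) := by
  rw [(hasFDerivAt_spaceDiv hG p).fderiv]
  rfl

theorem fderiv_spaceDiv_apply_eq_zero_of_stretching {v w : ℝ → E → E}
    (hv : ContDiff ℝ 2 (uncurry v)) (hw : ContDiff ℝ 2 (uncurry w))
    (hv_div : ∀ t x, traceL E (fderiv ℝ (v t) x) = 0) {t : ℝ}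
    (hstretch : ∀ x, deriv (w · x) t + fderiv ℝ (w t) x (v t x) = fderiv ℝ (v t) x (w t x))
    (x : E) :
    fderiv ℝ (spaceDiv (uncurry w)) (t, x) (1, v t x) = 0 := by
  have hvd := hv.differentiable two_ne_zero
  have hwd := hw.differentiable two_ne_zero
  have hstretch_uncurry : (fun y ↦ fderiv ℝ (uncurry w) (t, y) (1, v t y))
      = fun y ↦ fderiv ℝ (uncurry v) (t, y) (0, w t y) := by
    funext y
    have h := hstretch y
    rw [deriv_eq_fderiv_uncurry_apply (hwd _), fderiv_eq_fderiv_uncurry_comp_inr (hwd _),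
      fderiv_eq_fderiv_uncurry_comp_inr (hvd _), ContinuousLinearMap.comp_apply,
      ContinuousLinearMap.comp_apply, ← map_add] at h
    simpa using h
  have hvx : DifferentiableAt ℝ (v t) x :=
    (hvd (t, x)).comp x (hasFDerivAt_prodMk_right t x).differentiableAt
  have hwx : DifferentiableAt ℝ (w t) x :=
    (hwd (t, x)).comp x (hasFDerivAt_prodMk_right t x).differentiableAt
  have hL := hasFDerivAt_fderiv_apply_prodMk hw t 1 hvx.hasFDerivAt
  have hR := hasFDerivAt_fderiv_apply_prodMk hv t 0 hwx.hasFDerivAt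
  rw [hstretch_uncurry] at hL
  have hspaceDiv_v : spaceDiv (uncurry v) = fun _ ↦ 0 :=
    funext fun p ↦ (spaceDiv_uncurry (hvd p)).trans (hv_div p.1 p.2)
  have h0 : fderiv ℝ (spaceDiv (uncurry v)) (t, x) (0, w t x) = 0 := by
    simp [hspaceDiv_v]
  have htrace := congrArg (traceL E) (hL.unique hR)
  rw [map_add, map_add, ← fderiv_spaceDiv_apply hw, ← fderiv_spaceDiv_apply hv, h0,
    fderiv_eq_fderiv_uncurry_comp_inr (hvd _), fderiv_eq_fderiv_uncurry_comp_inr (hwd _),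
    traceL_comp_comm] at htrace
  linarith

end Divergence

section Characteristics

variable [CompleteSpace E] {v : ℝ → E → E} {a b : ℝ} {L K : ℝ≥0}

theorem exists_eq_forall_mem_Icc_hasDerivWithinAt_of_lipschitzWith
    (hcont : ∀ x, ContinuousOn (v · x) (Icc a b)) (hbdd : ∀ t ∈ Icc a b, ∀ x, ‖v t x‖ ≤ L)
    (hlip : ∀ t ∈ Icc a b, LipschitzWith K (v t)) (t₀ : Icc a b) (x₀ : E) :
    ∃ X : ℝ → E, X t₀ = x₀ ∧ ∀ t ∈ Icc a b, HasDerivWithinAt X (v t (X t)) (Icc a b) t :=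
  IsPicardLindelof.exists_eq_forall_mem_Icc_hasDerivWithinAt₀
    (a := (L * max (b - t₀) (t₀ - a)).toNNReal)
    { lipschitzOnWith := fun t ht ↦ (hlip t ht).lipschitzOnWith
      continuousOn := fun x _ ↦ hcont x
      norm_le := fun t ht x _ ↦ hbdd t ht x
      mul_max_le := by simp }

theorem exists_eq_apply_of_fderiv_apply_eq_zero {φ : ℝ × E → F} (hφ : Differentiable ℝ φ)
    (htransport : ∀ t ∈ Icc a b, ∀ x, fderiv ℝ φ (t, x) (1, v t x) = 0)
    (hcont : ∀ x, ContinuousOn (v · x) (Icc a b)) (hbdd : ∀ t ∈ Icc a b, ∀ x, ‖v t x‖ ≤ L)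
    (hlip : ∀ t ∈ Icc a b, LipschitzWith K (v t)) {t : ℝ} (ht : t ∈ Icc a b) (x : E) :
    ∃ y, φ (t, x) = φ (a, y) := by
  obtain ⟨X, hXt, hX⟩ :=
    exists_eq_forall_mem_Icc_hasDerivWithinAt_of_lipschitzWith hcont hbdd hlip ⟨t, ht⟩ x
  have hφX : ∀ s ∈ Icc a b, HasDerivWithinAt (fun s ↦ φ (s, X s)) 0 (Icc a b) s := fun s hs ↦ by
    have h := (hφ (s, X s)).hasFDerivAt.comp_hasDerivWithinAt s
      ((hasDerivWithinAt_id s _).prodMk (hX s hs))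
    rwa [htransport s hs] at h
  have hconst := norm_image_sub_le_of_norm_deriv_le_segment' hφX (fun _ _ ↦ norm_zero.le) t ht
  refine ⟨X a, ?_⟩
  rw [← hXt]
  simpa [sub_eq_zero] using hconst

end Characteristics

theorem stretching_preserves_divergence_free_general
    (d : ℕ) (T : ℝ)
    (v : ℝ → Ed d → Ed d)
    (hv_diff : ContDiff ℝ 2 (Function.uncurry v))
    (hv_bdd : ∃ C, ∀ t x, ‖v t x‖ ≤ C)
    (hv_bdd1 : ∃ C, ∀ p : ℝ × Ed d, ‖fderiv ℝ (Function.uncurry v) p‖ ≤ C)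
    (hv_div : ∀ (t : ℝ) (x : Ed d), divg d (v t) x = 0)
    (w : ℝ → Ed d → Ed d)
    (hw_diff : ContDiff ℝ 2 (Function.uncurry w))
    (hstretch : ∀ t ∈ Icc (0 : ℝ) T, ∀ x : Ed d,
      deriv (fun τ => w τ x) t + fderiv ℝ (w t) x (v t x) = fderiv ℝ (v t) x (w t x))
    (hw0 : ∀ x : Ed d, divg d (w 0) x = 0) :
    ∀ t ∈ Icc (0 : ℝ) T, ∀ x : Ed d, divg d (w t) x = 0 := by
  obtain ⟨Cv, hCv⟩ := hv_bdd
  obtain ⟨C1, hC1⟩ := hv_bdd1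
  have hwd := hw_diff.differentiable two_ne_zero
  have hdivg_w (t : ℝ) (x : Ed d) : divg d (w t) x = spaceDiv (uncurry w) (t, x) := by
    rw [divg_eq_traceL, spaceDiv_uncurry (hwd _)]
  intro t ht x
  obtain ⟨y, hy⟩ := exists_eq_apply_of_fderiv_apply_eq_zero
    (fun p ↦ (hasFDerivAt_spaceDiv hw_diff p).differentiableAt)
    (fun s hs ↦ fderiv_spaceDiv_apply_eq_zero_of_stretching hv_diff hw_diff
      (fun s z ↦ divg_eq_traceL (v s) z ▸ hv_div s z) (hstretch s hs))
    (fun z ↦ (hv_diff.continuous.comp (continuous_id.prodMk continuous_const)).continuousOn)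
    (fun s _ z ↦ (hCv s z).trans (Real.le_coe_toNNReal Cv))
    (fun s _ ↦ lipschitzWith_of_norm_fderiv_uncurry_le (hv_diff.differentiable two_ne_zero)
      (fun p ↦ (hC1 p).trans (Real.le_coe_toNNReal C1)) s) ht x
  rw [hdivg_w, hy, ← hdivg_w, hw0]

/-- Propagation of the divergence-free condition by the stretching
equation `∂_t w + (v·∇)w = (w·∇)v` along a divergence-free velocity field. -/
theorem stretching_preserves_divergence_free
    (d : ℕ) (hd : 1 ≤ d) (T : ℝ) (hT : 0 < T)
    (v : ℝ → Ed d → Ed d)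
    (hv_diff : ContDiff ℝ 2 (Function.uncurry v))
    (hv_bdd : ∃ C, ∀ t x, ‖v t x‖ ≤ C)
    (hv_bdd1 : ∃ C, ∀ p : ℝ × Ed d, ‖fderiv ℝ (Function.uncurry v) p‖ ≤ C)
    (hv_bdd2 : ∃ C, ∀ p : ℝ × Ed d, ‖iteratedFDeriv ℝ 2 (Function.uncurry v) p‖ ≤ C)
    (hv_div : ∀ (t : ℝ) (x : Ed d), divg d (v t) x = 0)
    (w : ℝ → Ed d → Ed d)
    (hw_diff : ContDiff ℝ 2 (Function.uncurry w))
    (hw_bdd : ∃ C, ∀ t x, ‖w t x‖ ≤ C)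
    (hw_bdd1 : ∃ C, ∀ p : ℝ × Ed d, ‖fderiv ℝ (Function.uncurry w) p‖ ≤ C)
    (hstretch : ∀ t ∈ Icc (0 : ℝ) T, ∀ x : Ed d,
      deriv (fun τ => w τ x) t + fderiv ℝ (w t) x (v t x) = fderiv ℝ (v t) x (w t x))
    (hw0 : ∀ x : Ed d, divg d (w 0) x = 0) :
    ∀ t ∈ Icc (0 : ℝ) T, ∀ x : Ed d, divg d (w t) x = 0 :=
  stretching_preserves_divergence_free_general d T v hv_diff hv_bdd hv_bdd1 hv_div w hw_diff
    hstretch hw0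
end
end
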